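/- arXiv:2503.10534 — 2 statements merged into one kernel-verified Lean document; each statement's English description precedes it below -/
import Mathlib

section
/- (Proposition, part 2: accumulated constraint violation equals a dual increment) Suppose the problem setup holds and the iterate hypotheses hold, and set σ^{k+1} := −𝒫_{K°}[Ay^k − H̃^{1/2}z^k + g̃(x^{k+1})] for k ≥ 0. Then for every k ≥ 1: (1_N ⊗ I_{m+p})ᵀ Σ_{l=1}^{k} ( g̃(x^l) + σ^l ) = (1_N ⊗ I_{m+p})ᵀ A ( y^k − y^0 ); equivalently, the sum over i = 1,…,N of the i-th (m+p)-dimensional blocks of Σ_{l=1}^k (g̃(x^l) + σ^l) equals the sum over i of the i-th blocks of A(y^k − y^0). -/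
open Matrix
open scoped Kronecker

abbrev Blk (m p : ℕ) := Sum (Fin m) (Fin p)
abbrev Idx (N m p : ℕ) := Fin N × Blk m p

def projK {N m p : ℕ} (y : Idx N m p → ℝ) : Idx N m p → ℝ :=
  fun ij =>
    match ij with
    | (i, Sum.inl j) => max (y (i, Sum.inl j)) 0
    | (i, Sum.inr j) => y (i, Sum.inr j)

def projKpolar {N m p : ℕ} (y : Idx N m p → ℝ) : Idx N m p → ℝ :=
  fun ij =>
    match ij with
    | (i, Sum.inl j) => min (y (i, Sum.inl j)) 0
    | (_, Sum.inr _) => 0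

def memK {N m p : ℕ} (y : Idx N m p → ℝ) : Prop :=
  ∀ (i : Fin N) (j : Fin m), 0 ≤ y (i, Sum.inl j)

def IsMPInv {n : Type*} [Fintype n] [DecidableEq n] (M Md : Matrix n n ℝ) : Prop :=
  M * Md * M = M ∧ Md * M * Md = Md ∧ (M * Md)ᵀ = M * Md ∧ (Md * M)ᵀ = Md * M

def quadForm {n : Type*} [Fintype n] (M : Matrix n n ℝ) (w : n → ℝ) : ℝ :=
  w ⬝ᵥ (M *ᵥ w)

lemma kron_mulVec {N m p : ℕ} (M : Matrix (Fin N) (Fin N) ℝ) (v : Idx N m p → ℝ)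
    (i : Fin N) (j : Blk m p) :
    ((M ⊗ₖ (1 : Matrix (Blk m p) (Blk m p) ℝ)) *ᵥ v) (i, j) = ∑ i', M i i' * v (i', j) := by
  classical
  simp only [Matrix.mulVec, dotProduct, Fintype.sum_prod_type,
    Matrix.kroneckerMap_apply, Matrix.one_apply]
  refine Finset.sum_congr rfl fun i' _ => ?_
  rw [Finset.sum_eq_single j] <;> simp +contextual [eq_comm]

theorem stmt7
    (N m p : ℕ) (hN : 1 ≤ N) (hm : 1 ≤ m) (hp : 1 ≤ p)
    (d : Fin N → ℕ)
    (X : ∀ i : Fin N, Set (Fin (d i) → ℝ))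
    (hXne : ∀ i, (X i).Nonempty) (hXcl : ∀ i, IsClosed (X i))
    (hXcv : ∀ i, Convex ℝ (X i))
    (f : ∀ i : Fin N, (Fin (d i) → ℝ) → ℝ)
    (hf : ∀ i, ConvexOn ℝ Set.univ (f i))
    (g : ∀ i : Fin N, (Fin (d i) → ℝ) → Fin m → ℝ)
    (hg : ∀ i j, ConvexOn ℝ Set.univ (fun xi => g i xi j))
    (B : ∀ i : Fin N, Matrix (Fin p) (Fin (d i)) ℝ) (c : ∀ i : Fin N, Fin p → ℝ)
    (F : (∀ i, Fin (d i) → ℝ) → ℝ) (hF : ∀ x, F x = ∑ i, f i (x i))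
    (tg : (∀ i, Fin (d i) → ℝ) → Idx N m p → ℝ)
    (htg1 : ∀ x (i : Fin N) (j : Fin m), tg x (i, Sum.inl j) = g i (x i) j)
    (htg2 : ∀ x (i : Fin N) (j : Fin p), tg x (i, Sum.inr j) = (B i *ᵥ x i + c i) j)
    (ρ : ℝ) (hρ : 0 < ρ)
    (PA PH PHt : Matrix (Fin N) (Fin N) ℝ)
    (hPA : PA.PosSemidef) (hPH : PH.PosSemidef) (hPHt : PHt.PosSemidef)
    (hDdiag : (PA + ρ • PH).IsDiag) (hDpd : (PA + ρ • PH).PosDef)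
    (hHHt : (PH - PHt).PosSemidef)
    (hPHnull : ∀ v : Fin N → ℝ, PH *ᵥ v = 0 ↔ ∃ t : ℝ, v = fun _ => t)
    (hPHtnull : ∀ v : Fin N → ℝ, PHt *ᵥ v = 0 ↔ ∃ t : ℝ, v = fun _ => t)
    (A Htld D : Matrix (Idx N m p) (Idx N m p) ℝ)
    (hA : A = PA ⊗ₖ (1 : Matrix (Blk m p) (Blk m p) ℝ))
    (hHtld : Htld = PHt ⊗ₖ (1 : Matrix (Blk m p) (Blk m p) ℝ))
    (hD : D = A + ρ • (PH ⊗ₖ (1 : Matrix (Blk m p) (Blk m p) ℝ)))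
    (Hhalf : Matrix (Idx N m p) (Idx N m p) ℝ)
    (hHhalfpsd : Hhalf.PosSemidef) (hHhalfsq : Hhalf * Hhalf = Htld)
    (x : ℕ → ∀ i, Fin (d i) → ℝ) (y z : ℕ → Idx N m p → ℝ)
    (hxX : ∀ k, ∀ i, x (k + 1) i ∈ X i)
    (hy0 : memK (y 0))
    (hyupd : ∀ k, y (k + 1) = projK (D⁻¹ *ᵥ ((A *ᵥ y k) - (Hhalf *ᵥ z k) + tg (x (k + 1)))))
    (hzupd : ∀ k, z (k + 1) = z k + ρ • (Hhalf *ᵥ y (k + 1)))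
    (σ : ℕ → Idx N m p → ℝ)
    (hσ : ∀ k, σ (k + 1) = -projKpolar ((A *ᵥ y k) - (Hhalf *ᵥ z k) + tg (x (k + 1))))
    :
    ∀ k : ℕ, 1 ≤ k → ∀ j : Blk m p,
      (∑ i : Fin N, ∑ l ∈ Finset.Icc 1 k, (tg (x l) (i, j) + σ l (i, j)))
        = ∑ i : Fin N, (A *ᵥ (y k - y 0)) (i, j) := by

  intro k hk j
  classical
  set Q := PA + ρ • PH with hQdef
  -- Q has positive diagonal
  have hQpos : ∀ i, 0 < Q i i := by
    intro i
    have hne : (Pi.single i 1 : Fin N → ℝ) ≠ 0 := by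
      intro h
      have := congrFun h i
      simp at this
    have := hDpd.dotProduct_mulVec_pos (x := Pi.single i 1) hne
    simpa [Matrix.mulVec, dotProduct, Pi.single_apply, hQdef] using this
  -- D as kronecker / diagonal
  have hDkron : D = Q ⊗ₖ (1 : Matrix (Blk m p) (Blk m p) ℝ) := by
    rw [hD, hA, hQdef, Matrix.add_kronecker, Matrix.smul_kronecker]
  have hDeq : D = Matrix.diagonal (fun ij : Idx N m p => Q ij.1 ij.1) := by
    rw [hDkron]
    ext ⟨i, j⟩ ⟨i', j'⟩
    by_cases hii : i = i'
    · subst hii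
      by_cases hjj : j = j' <;>
        simp [Matrix.kroneckerMap_apply, Matrix.one_apply, Matrix.diagonal, Prod.ext_iff, hjj]
    · have h0 : Q i i' = 0 := hDdiag hii
      simp [Matrix.kroneckerMap_apply, Matrix.diagonal, Prod.ext_iff, hii, h0]
  have hDinv : D⁻¹ = Matrix.diagonal (fun ij : Idx N m p => (Q ij.1 ij.1)⁻¹) := by
    rw [hDeq]
    apply Matrix.inv_eq_right_inv
    rw [Matrix.diagonal_mul_diagonal]
    ext ij ij'
    by_cases h : ij = ij'
    · subst h
      simp [mul_inv_cancel₀ (hQpos ij.1).ne']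
    · simp [Matrix.diagonal, h, Matrix.one_apply, h]
  -- pointwise key identity
  have key : ∀ (l : ℕ) (i : Fin N) (jj : Blk m p),
      tg (x (l+1)) (i, jj) + σ (l+1) (i, jj)
        = (D *ᵥ y (l+1)) (i, jj) - (A *ᵥ y l) (i, jj) + (Hhalf *ᵥ z l) (i, jj) := by
    intro l i jj
    set w : Idx N m p → ℝ := (A *ᵥ y l) - (Hhalf *ᵥ z l) + tg (x (l+1)) with hw
    have hDinvw : ∀ ij : Idx N m p, (D⁻¹ *ᵥ w) ij = (Q ij.1 ij.1)⁻¹ * w ij := by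
      intro ij
      rw [hDinv]
      rcases ij with ⟨a, b⟩
      rw [Matrix.mulVec_diagonal]
    have hyD : (D *ᵥ y (l+1)) (i, jj) = projK w (i, jj) := by
      have hy1 : y (l+1) (i, jj) = (Q i i)⁻¹ * projK w (i, jj) := by
        rw [hyupd l]
        rcases jj with jj | jj
        · show max ((D⁻¹ *ᵥ w) (i, Sum.inl jj)) 0 = (Q i i)⁻¹ * max (w (i, Sum.inl jj)) 0
          rw [hDinvw]
          rw [mul_max_of_nonneg _ _ (le_of_lt (inv_pos.mpr (hQpos i)))]
          simp
        · show (D⁻¹ *ᵥ w) (i, Sum.inr jj) = (Q i i)⁻¹ * w (i, Sum.inr jj)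
          exact hDinvw _
      rw [hDeq, Matrix.mulVec_diagonal, hy1, ← mul_assoc,
        mul_inv_cancel₀ (hQpos i).ne', one_mul]
    have hmor : w (i, jj) = projK w (i, jj) + projKpolar w (i, jj) := by
      rcases jj with jj | jj
      · show w (i, Sum.inl jj) = max (w (i, Sum.inl jj)) 0 + min (w (i, Sum.inl jj)) 0
        rcases le_total (w (i, Sum.inl jj)) 0 with h | h <;>
          simp [max_eq_right, max_eq_left, min_eq_left, min_eq_right, h]
      · show w (i, Sum.inr jj) = w (i, Sum.inr jj) + 0
        ring
    have hσ' : σ (l+1) (i, jj) = - projKpolar w (i, jj) := by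
      rw [hσ l]; rfl
    have htgw : tg (x (l+1)) (i, jj)
        = w (i, jj) - (A *ᵥ y l) (i, jj) + (Hhalf *ᵥ z l) (i, jj) := by
      simp only [hw, Pi.add_apply, Pi.sub_apply]
      ring
    rw [htgw, hσ', hmor, ← hyD]
    ring
  -- sums over i of H-type terms vanish
  have hHsum : ∀ v : Idx N m p → ℝ,
      ∑ i, (((PH : Matrix (Fin N) (Fin N) ℝ) ⊗ₖ (1 : Matrix (Blk m p) (Blk m p) ℝ)) *ᵥ v) (i, j) = 0 := by
    intro v
    simp only [kron_mulVec]
    rw [Finset.sum_comm]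
    refine Finset.sum_eq_zero fun i' _ => ?_
    rw [← Finset.sum_mul]
    have hone : PH *ᵥ (fun _ => (1:ℝ)) = 0 := (hPHnull _).mpr ⟨1, rfl⟩
    have hsym : ∀ a b, PH a b = PH b a := by
      intro a b
      have := hPH.1.apply b a
      simpa using this
    have hzero : ∑ i, PH i i' = 0 := by
      have := congrFun hone i'
      simp only [Matrix.mulVec, dotProduct, mul_one, Pi.zero_apply] at this
      calc ∑ i, PH i i' = ∑ i, PH i' i := Finset.sum_congr rfl fun i _ => hsym i i'
        _ = 0 := this
    rw [hzero, zero_mul]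
  have hHhalfsym : ∀ a b, Hhalf a b = Hhalf b a := by
    intro a b
    have := hHhalfpsd.1.apply b a
    simpa using this
  have hHhalfsum : ∀ v : Idx N m p → ℝ, ∑ i, (Hhalf *ᵥ v) (i, j) = 0 := by
    intro v
    set u : Idx N m p → ℝ := fun ij => if ij.2 = j then 1 else 0 with hu
    have hHtu : Htld *ᵥ u = 0 := by
      funext ij
      rcases ij with ⟨i, j''⟩
      rw [hHtld, kron_mulVec]
      by_cases h : j'' = j
      · have hone : PHt *ᵥ (fun _ => (1:ℝ)) = 0 := (hPHtnull _).mpr ⟨1, rfl⟩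
        have := congrFun hone i
        simp only [Matrix.mulVec, dotProduct, mul_one, Pi.zero_apply] at this
        simpa [hu, h] using this
      · simp [hu, h]
    have hHu : Hhalf *ᵥ u = 0 := by
      have hsq : (Hhalf *ᵥ u) ⬝ᵥ (Hhalf *ᵥ u) = 0 := by
        have h2 : Hhalf *ᵥ (Hhalf *ᵥ u) = 0 := by
          rw [Matrix.mulVec_mulVec, hHhalfsq, hHtu]
        calc (Hhalf *ᵥ u) ⬝ᵥ (Hhalf *ᵥ u)
            = ∑ a, ∑ b, (Hhalf *ᵥ u) a * (Hhalf a b * u b) := by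
              simp [dotProduct, Matrix.mulVec, Finset.mul_sum]
          _ = ∑ b, u b * ∑ a, Hhalf b a * (Hhalf *ᵥ u) a := by
              rw [Finset.sum_comm]
              refine Finset.sum_congr rfl fun b _ => ?_
              rw [Finset.mul_sum]
              refine Finset.sum_congr rfl fun a _ => ?_
              rw [hHhalfsym a b]; ring
          _ = ∑ b, u b * (Hhalf *ᵥ (Hhalf *ᵥ u)) b := by
              refine Finset.sum_congr rfl fun b _ => ?_
              simp [Matrix.mulVec, dotProduct]
          _ = 0 := by rw [h2]; simp
      exact dotProduct_self_eq_zero.mp hsq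
    calc ∑ i, (Hhalf *ᵥ v) (i, j) = u ⬝ᵥ (Hhalf *ᵥ v) := by
          simp [hu, dotProduct, Fintype.sum_prod_type, Finset.sum_ite_eq]
      _ = ∑ b, v b * ∑ a, Hhalf b a * u a := by
          simp only [dotProduct, Matrix.mulVec, Finset.mul_sum]
          rw [Finset.sum_comm]
          refine Finset.sum_congr rfl fun b _ => ?_
          refine Finset.sum_congr rfl fun a _ => ?_
          rw [hHhalfsym a b]; ring
      _ = ∑ b, v b * (Hhalf *ᵥ u) b := by
          refine Finset.sum_congr rfl fun b _ => ?_
          simp [Matrix.mulVec, dotProduct]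
      _ = 0 := by rw [hHu]; simp
  -- per-step summed identity
  have perl : ∀ l : ℕ, ∑ i, (tg (x (l+1)) (i, j) + σ (l+1) (i, j))
      = (∑ i, (A *ᵥ y (l+1)) (i, j)) - ∑ i, (A *ᵥ y l) (i, j) := by
    intro l
    have hDsp : ∀ i : Fin N, (D *ᵥ y (l+1)) (i, j)
        = (A *ᵥ y (l+1)) (i, j)
          + ρ * (((PH : Matrix (Fin N) (Fin N) ℝ) ⊗ₖ (1 : Matrix (Blk m p) (Blk m p) ℝ)) *ᵥ y (l+1)) (i, j) := by
      intro i
      rw [hD, Matrix.add_mulVec, Matrix.smul_mulVec]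
      simp
    calc ∑ i, (tg (x (l+1)) (i, j) + σ (l+1) (i, j))
        = ∑ i, ((D *ᵥ y (l+1)) (i, j) - (A *ᵥ y l) (i, j) + (Hhalf *ᵥ z l) (i, j)) :=
          Finset.sum_congr rfl fun i _ => key l i j
      _ = ∑ i, ((A *ᵥ y (l+1)) (i, j)
            + ρ * (((PH : Matrix (Fin N) (Fin N) ℝ) ⊗ₖ (1 : Matrix (Blk m p) (Blk m p) ℝ)) *ᵥ y (l+1)) (i, j)
            - (A *ᵥ y l) (i, j) + (Hhalf *ᵥ z l) (i, j)) :=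
          Finset.sum_congr rfl fun i _ => by rw [hDsp i]
      _ = (∑ i, (A *ᵥ y (l+1)) (i, j))
            + ρ * (∑ i, (((PH : Matrix (Fin N) (Fin N) ℝ) ⊗ₖ (1 : Matrix (Blk m p) (Blk m p) ℝ)) *ᵥ y (l+1)) (i, j))
            - (∑ i, (A *ᵥ y l) (i, j)) + ∑ i, (Hhalf *ᵥ z l) (i, j) := by
          rw [Finset.mul_sum]
          rw [← Finset.sum_add_distrib, ← Finset.sum_sub_distrib, ← Finset.sum_add_distrib]
      _ = (∑ i, (A *ᵥ y (l+1)) (i, j)) - ∑ i, (A *ᵥ y l) (i, j) := by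
          rw [hHsum, hHhalfsum]; ring
  -- assemble
  rw [Finset.sum_comm]
  have hIcc : ∑ l ∈ Finset.Icc 1 k, ∑ i, (tg (x l) (i, j) + σ l (i, j))
      = ∑ l ∈ Finset.range k, ∑ i, (tg (x (l+1)) (i, j) + σ (l+1) (i, j)) := by
    rw [← Finset.Ico_add_one_right_eq_Icc, Finset.sum_Ico_eq_sum_range]
    simp [add_comm]
  rw [hIcc]
  have htel := Finset.sum_range_sub (fun l => ∑ i, (A *ᵥ y l) (i, j)) k
  calc ∑ l ∈ Finset.range k, ∑ i, (tg (x (l+1)) (i, j) + σ (l+1) (i, j))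
      = ∑ l ∈ Finset.range k, ((∑ i, (A *ᵥ y (l+1)) (i, j)) - ∑ i, (A *ᵥ y l) (i, j)) :=
        Finset.sum_congr rfl fun l _ => perl l
    _ = (∑ i, (A *ᵥ y k) (i, j)) - ∑ i, (A *ᵥ y 0) (i, j) := htel
    _ = ∑ i, (A *ᵥ (y k - y 0)) (i, j) := by
        rw [← Finset.sum_sub_distrib]
        refine Finset.sum_congr rfl fun i _ => ?_
        rw [Matrix.mulVec_sub]
        simp
end

section
/- (Lemma: per-iteration objective bound for DUCA) Suppose the problem setup holds, each X_i is additionally compact, the saddle point hypotheses hold, and the sequences (x^k)_{k≥1}, (y^k)_{k≥0}, (z^k)_{k≥0} are generated by DUCA. Then for every k ≥ 0: f(x^{k+1}) − f(x*) ≤ ½(‖y^k‖²_A − ‖y^{k+1}‖²_A) + (1/(2ρ))·( (v^k − v*)ᵀH̃†(v^k − v*) − (v^{k+1} − v*)ᵀH̃†(v^{k+1} − v*) ). -/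
open Matrix
open scoped Kronecker

section Helpers

variable {n : Type*} [Fintype n] [DecidableEq n]

lemma mpinv_unique {M B C : Matrix n n ℝ} (hB : IsMPInv M B) (hC : IsMPInv M C) : B = C := by
  obtain ⟨hB1, hB2, hB3, hB4⟩ := hB
  obtain ⟨hC1, hC2, hC3, hC4⟩ := hC
  have hAB : M * B = M * C := by
    calc M * B = (M * B)ᵀ := hB3.symm
      _ = Bᵀ * Mᵀ := transpose_mul _ _
      _ = Bᵀ * (M * C * M)ᵀ := by rw [hC1]
      _ = Bᵀ * (Mᵀ * (M * C)ᵀ) := by rw [transpose_mul (M * C) M]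
      _ = Bᵀ * (Mᵀ * (M * C)) := by rw [hC3]
      _ = (Bᵀ * Mᵀ) * (M * C) := (mul_assoc _ _ _).symm
      _ = (M * B) * (M * C) := by rw [← transpose_mul, hB3]
      _ = M * C := by rw [← mul_assoc, hB1]
  have hBA : B * M = C * M := by
    calc B * M = (B * M)ᵀ := hB4.symm
      _ = Mᵀ * Bᵀ := transpose_mul _ _
      _ = (M * C * M)ᵀ * Bᵀ := by rw [hC1]
      _ = (Mᵀ * (M * C)ᵀ) * Bᵀ := by rw [transpose_mul (M * C) M]
      _ = (Mᵀ * (Cᵀ * Mᵀ)) * Bᵀ := by rw [transpose_mul M C]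
      _ = ((Mᵀ * Cᵀ) * Mᵀ) * Bᵀ := by rw [← mul_assoc Mᵀ Cᵀ Mᵀ]
      _ = (Mᵀ * Cᵀ) * (Mᵀ * Bᵀ) := mul_assoc _ _ _
      _ = (C * M)ᵀ * (B * M)ᵀ := by rw [← transpose_mul, ← transpose_mul]
      _ = (C * M) * (B * M) := by rw [hC4, hB4]
      _ = C * (M * (B * M)) := mul_assoc _ _ _
      _ = C * ((M * B) * M) := by rw [← mul_assoc M B M]
      _ = C * M := by rw [hB1]
  calc B = B * M * B := hB2.symm
    _ = (C * M) * B := by rw [hBA]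
    _ = C * (M * B) := by rw [mul_assoc]
    _ = C * (M * C) := by rw [hAB]
    _ = C * M * C := by rw [mul_assoc]
    _ = C := hC2

lemma mpinv_of_transpose {M B : Matrix n n ℝ} (hM : Mᵀ = M) (hB : IsMPInv M B) :
    IsMPInv M Bᵀ := by
  obtain ⟨hB1, hB2, hB3, hB4⟩ := hB
  refine ⟨?_, ?_, ?_, ?_⟩
  · have h : (M * Bᵀ * M)ᵀ = Mᵀ := by
      rw [transpose_mul, transpose_mul, transpose_transpose, hM, ← mul_assoc, hB1]
    calc M * Bᵀ * M = ((M * Bᵀ * M)ᵀ)ᵀ := (transpose_transpose _).symm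
      _ = (Mᵀ)ᵀ := by rw [h]
      _ = M := transpose_transpose _
  · have h : (Bᵀ * M * Bᵀ)ᵀ = (B * Mᵀ) * B := by
      rw [transpose_mul, transpose_mul, transpose_transpose, ← mul_assoc]
    calc Bᵀ * M * Bᵀ = ((Bᵀ * M * Bᵀ)ᵀ)ᵀ := (transpose_transpose _).symm
      _ = ((B * Mᵀ) * B)ᵀ := by rw [h]
      _ = ((B * M) * B)ᵀ := by rw [hM]
      _ = Bᵀ := by rw [hB2]
  · have h1 : M * Bᵀ = (B * M)ᵀ := by rw [transpose_mul, hM]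
    rw [h1, transpose_transpose, hB4]
  · have h1 : Bᵀ * M = (M * B)ᵀ := by rw [transpose_mul, hM]
    rw [h1, transpose_transpose, hB3]

lemma mpinv_symm {M B : Matrix n n ℝ} (hM : Mᵀ = M) (hB : IsMPInv M B) : Bᵀ = B :=
  mpinv_unique (mpinv_of_transpose hM hB) hB

lemma mpinv_comm {M B : Matrix n n ℝ} (hM : Mᵀ = M) (hB : IsMPInv M B) :
    M * B = B * M := by
  have hBs := mpinv_symm hM hB
  calc M * B = (M * B)ᵀ := hB.2.2.1.symm
    _ = Bᵀ * Mᵀ := transpose_mul _ _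
    _ = B * M := by rw [hBs, hM]

lemma mpinv_sq {M Md : Matrix n n ℝ} (hM : Mᵀ = M) (h : IsMPInv M Md) :
    IsMPInv (M * M) (Md * Md) := by
  obtain ⟨h1, h2, h3, h4⟩ := h
  have hcomm : M * Md = Md * M := mpinv_comm hM ⟨h1, h2, h3, h4⟩
  -- key products
  have hPP : (M * Md) * (M * Md) = M * Md := by
    calc (M * Md) * (M * Md) = M * (Md * M * Md) := by
          rw [mul_assoc, ← mul_assoc Md M Md]
      _ = M * Md := by rw [h2]
  have hsq1 : (M * M) * (Md * Md) = M * Md := by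
    calc (M * M) * (Md * Md) = M * (M * Md) * Md := by rw [mul_assoc, ← mul_assoc M Md Md, ← mul_assoc]
      _ = M * (Md * M) * Md := by rw [hcomm]
      _ = (M * Md) * (M * Md) := by rw [mul_assoc, mul_assoc, mul_assoc]
      _ = M * Md := hPP
  have hsq2 : (Md * Md) * (M * M) = M * Md := by
    calc (Md * Md) * (M * M) = Md * (Md * M) * M := by rw [mul_assoc, ← mul_assoc Md M M, ← mul_assoc]
      _ = Md * (M * Md) * M := by rw [hcomm]
      _ = (Md * M) * (Md * M) := by rw [mul_assoc, mul_assoc, mul_assoc]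
      _ = (M * Md) * (M * Md) := by rw [hcomm]
      _ = M * Md := hPP
  refine ⟨?_, ?_, ?_, ?_⟩
  · calc M * M * (Md * Md) * (M * M) = (M * Md) * (M * M) := by rw [hsq1]
      _ = (M * Md * M) * M := (mul_assoc (M * Md) M M).symm
      _ = M * M := by rw [h1]
  · calc Md * Md * (M * M) * (Md * Md) = (M * Md) * (Md * Md) := by rw [hsq2]
      _ = (Md * M) * (Md * Md) := by rw [hcomm]
      _ = (Md * M * Md) * Md := (mul_assoc (Md * M) Md Md).symm
      _ = Md * Md := by rw [h2]
  · rw [hsq1, h3]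
  · rw [hsq2, h3]

lemma dot_symm {S : Matrix n n ℝ} (hS : Sᵀ = S) (a b : n → ℝ) :
    a ⬝ᵥ (S *ᵥ b) = b ⬝ᵥ (S *ᵥ a) := by
  rw [dotProduct_mulVec, ← mulVec_transpose, hS, dotProduct_comm]

lemma dot_shift {S : Matrix n n ℝ} (hS : Sᵀ = S) (a b : n → ℝ) :
    (S *ᵥ a) ⬝ᵥ b = a ⬝ᵥ (S *ᵥ b) := by
  rw [dotProduct_comm, dot_symm hS]

lemma pos_coeff_of_forall {a C : ℝ} (h : ∀ t : ℝ, 0 < t → t ≤ 1 → 0 ≤ t * a + t ^ 2 * C) :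
    0 ≤ a := by
  by_contra hneg
  push_neg at hneg
  rcases le_or_gt C 0 with hC | hC
  · have := h 1 one_pos le_rfl; nlinarith
  · have hden : (0:ℝ) < 2 * C := by linarith
    set t := min 1 (-a / (2 * C)) with htdef
    have ht0 : 0 < t := lt_min one_pos (div_pos (by linarith) hden)
    have ht1 : t ≤ 1 := min_le_left _ _
    have h2 : t ≤ -a / (2 * C) := min_le_right _ _
    have h3 : t * (2 * C) ≤ -a := by
      rw [← le_div_iff₀ hden]; exact h2
    have h4 : t ^ 2 * (2 * C) ≤ t * (-a) := by
      calc t ^ 2 * (2 * C) = t * (t * (2 * C)) := by ring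
        _ ≤ t * (-a) := by
            exact mul_le_mul_of_nonneg_left h3 ht0.le
    have hh := h t ht0 ht1
    nlinarith [mul_pos ht0 (show (0:ℝ) < -a by linarith)]

lemma max_sq_mono {s s' : ℝ} (h : s ≤ s') : max s 0 ^ 2 ≤ max s' 0 ^ 2 := by
  have h0 : 0 ≤ max s 0 := le_max_right _ _
  exact pow_le_pow_left₀ h0 (max_le_max h le_rfl) 2

lemma max_shift_sq {a δ t : ℝ} : max (a + t * δ) 0 ^ 2 ≤ (max a 0 + t * δ) ^ 2 := by
  rcases le_or_gt 0 a with ha | ha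
  · rw [max_eq_left ha]
    rcases le_or_gt 0 (a + t * δ) with hb | hb
    · rw [max_eq_left hb]
    · rw [max_eq_right hb.le]; simpa using sq_nonneg (a + t * δ)
  · rw [max_eq_right ha.le, zero_add]
    rcases le_or_gt 0 (a + t * δ) with hb | hb
    · rw [max_eq_left hb]
      have h5 : -a ≤ t * δ := by linarith
      have h6 : (-a) * (-a) ≤ (-a) * (t * δ) :=
        mul_le_mul_of_nonneg_left h5 (by linarith)
      nlinarith
    · rw [max_eq_right hb.le]; simpa using sq_nonneg (t * δ)


set_option linter.unusedSectionVars false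

lemma herm_tr {M : Matrix n n ℝ} (h : M.IsHermitian) : Mᵀ = M := by
  ext i j
  rw [Matrix.transpose_apply]
  simpa [Matrix.conjTranspose_apply] using (congrFun (congrFun h j) i).symm

lemma quad_diagonal {w v : n → ℝ} :
    quadForm (Matrix.diagonal w) v = ∑ i, w i * v i ^ 2 := by
  unfold quadForm
  rw [dotProduct]
  congr 1
  ext i
  rw [mulVec_diagonal]
  ring

lemma kron_one_mulVec {N m p : ℕ} (M : Matrix (Fin N) (Fin N) ℝ) (w : Idx N m p → ℝ)
    (i : Fin N) (j : Blk m p) :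
    ((M ⊗ₖ (1 : Matrix (Blk m p) (Blk m p) ℝ)) *ᵥ w) (i, j) = ∑ i', M i i' * w (i', j) := by
  rw [mulVec, dotProduct, Fintype.sum_prod_type]
  congr 1
  ext i'
  rw [Finset.sum_eq_single j]
  · simp [Matrix.kronecker_apply, Matrix.one_apply]
  · intro b _ hb
    simp [Matrix.kronecker_apply, Matrix.one_apply, hb.symm]
  · simp

lemma kron_one_quad {N m p : ℕ} (M : Matrix (Fin N) (Fin N) ℝ) (w : Idx N m p → ℝ) :
    quadForm (M ⊗ₖ (1 : Matrix (Blk m p) (Blk m p) ℝ)) w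
      = ∑ j : Blk m p, quadForm M (fun i => w (i, j)) := by
  unfold quadForm
  rw [dotProduct, Fintype.sum_prod_type, Finset.sum_comm]
  congr 1
  ext j
  rw [dotProduct]
  congr 1
  ext i
  rw [kron_one_mulVec]
  rfl

lemma kron_one_quad_nonneg {N m p : ℕ} {M : Matrix (Fin N) (Fin N) ℝ} (hM : M.PosSemidef)
    (w : Idx N m p → ℝ) :
    0 ≤ quadForm (M ⊗ₖ (1 : Matrix (Blk m p) (Blk m p) ℝ)) w := by
  rw [kron_one_quad]
  apply Finset.sum_nonneg
  intro j _
  have := hM.dotProduct_mulVec_nonneg (fun i => w (i, j))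
  simpa [quadForm] using this

lemma kron_one_symm {N m p : ℕ} {M : Matrix (Fin N) (Fin N) ℝ} (hM : Mᵀ = M) :
    (M ⊗ₖ (1 : Matrix (Blk m p) (Blk m p) ℝ))ᵀ = M ⊗ₖ (1 : Matrix (Blk m p) (Blk m p) ℝ) := by
  ext ⟨i, j⟩ ⟨i', j'⟩
  rw [Matrix.transpose_apply, Matrix.kronecker_apply, Matrix.kronecker_apply]
  have h1 : M i i' = M i' i := congrFun (congrFun hM i') i
  rw [← h1, Matrix.one_apply, Matrix.one_apply]
  by_cases h : j = j' <;> simp [h, eq_comm]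

lemma kron_one_sub {N m p : ℕ} (M M' : Matrix (Fin N) (Fin N) ℝ) :
    ((M - M') ⊗ₖ (1 : Matrix (Blk m p) (Blk m p) ℝ))
      = M ⊗ₖ (1 : Matrix (Blk m p) (Blk m p) ℝ) - M' ⊗ₖ (1 : Matrix (Blk m p) (Blk m p) ℝ) := by
  ext ⟨i, j⟩ ⟨i', j'⟩
  simp [Matrix.kronecker_apply, Matrix.sub_apply, sub_mul]


lemma projK_inl {N m p : ℕ} (v : Idx N m p → ℝ) (i : Fin N) (jj : Fin m) :
    projK v (i, Sum.inl jj) = max (v (i, Sum.inl jj)) 0 := rfl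

lemma projK_inr {N m p : ℕ} (v : Idx N m p → ℝ) (i : Fin N) (jj : Fin p) :
    projK v (i, Sum.inr jj) = v (i, Sum.inr jj) := rfl

end Helpers



theorem stmt11
    (N m p : ℕ) (hN : 1 ≤ N) (hm : 1 ≤ m) (hp : 1 ≤ p)
    (d : Fin N → ℕ)
    (X : ∀ i : Fin N, Set (Fin (d i) → ℝ))
    (hXne : ∀ i, (X i).Nonempty) (hXcl : ∀ i, IsClosed (X i))
    (hXcv : ∀ i, Convex ℝ (X i))
    (f : ∀ i : Fin N, (Fin (d i) → ℝ) → ℝ)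
    (hf : ∀ i, ConvexOn ℝ Set.univ (f i))
    (g : ∀ i : Fin N, (Fin (d i) → ℝ) → Fin m → ℝ)
    (hg : ∀ i j, ConvexOn ℝ Set.univ (fun xi => g i xi j))
    (B : ∀ i : Fin N, Matrix (Fin p) (Fin (d i)) ℝ) (c : ∀ i : Fin N, Fin p → ℝ)
    (F : (∀ i, Fin (d i) → ℝ) → ℝ) (hF : ∀ x, F x = ∑ i, f i (x i))
    (tg : (∀ i, Fin (d i) → ℝ) → Idx N m p → ℝ)
    (htg1 : ∀ x (i : Fin N) (j : Fin m), tg x (i, Sum.inl j) = g i (x i) j)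
    (htg2 : ∀ x (i : Fin N) (j : Fin p), tg x (i, Sum.inr j) = (B i *ᵥ x i + c i) j)
    (ρ : ℝ) (hρ : 0 < ρ)
    (PA PH PHt : Matrix (Fin N) (Fin N) ℝ)
    (hPA : PA.PosSemidef) (hPH : PH.PosSemidef) (hPHt : PHt.PosSemidef)
    (hDdiag : (PA + ρ • PH).IsDiag) (hDpd : (PA + ρ • PH).PosDef)
    (hHHt : (PH - PHt).PosSemidef)
    (hPHnull : ∀ v : Fin N → ℝ, PH *ᵥ v = 0 ↔ ∃ t : ℝ, v = fun _ => t)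
    (hPHtnull : ∀ v : Fin N → ℝ, PHt *ᵥ v = 0 ↔ ∃ t : ℝ, v = fun _ => t)
    (A Htld D : Matrix (Idx N m p) (Idx N m p) ℝ)
    (hA : A = PA ⊗ₖ (1 : Matrix (Blk m p) (Blk m p) ℝ))
    (hHtld : Htld = PHt ⊗ₖ (1 : Matrix (Blk m p) (Blk m p) ℝ))
    (hD : D = A + ρ • (PH ⊗ₖ (1 : Matrix (Blk m p) (Blk m p) ℝ)))
    (Hhalf : Matrix (Idx N m p) (Idx N m p) ℝ)
    (hHhalfpsd : Hhalf.PosSemidef) (hHhalfsq : Hhalf * Hhalf = Htld)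
    (hXcp : ∀ i, IsCompact (X i))
    (Htdag : Matrix (Idx N m p) (Idx N m p) ℝ) (hHtdag : IsMPInv Htld Htdag)
    (Hhalfdag : Matrix (Idx N m p) (Idx N m p) ℝ) (hHhalfdag : IsMPInv Hhalf Hhalfdag)
    (x : ℕ → ∀ i, Fin (d i) → ℝ) (y z : ℕ → Idx N m p → ℝ)
    (hxX : ∀ k, ∀ i, x (k + 1) i ∈ X i)
    (hy0 : memK (y 0))
    (hyupd : ∀ k, y (k + 1) = projK (D⁻¹ *ᵥ ((A *ᵥ y k) - (Hhalf *ᵥ z k) + tg (x (k + 1)))))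
    (hzupd : ∀ k, z (k + 1) = z k + ρ • (Hhalf *ᵥ y (k + 1)))
    (hxmin : ∀ k, ∀ w, (∀ i, w i ∈ X i) →
      F (x (k + 1))
          + (1 / 2) * quadForm D⁻¹ (projK ((A *ᵥ y k) - (Hhalf *ᵥ z k) + tg (x (k + 1))))
        ≤ F w + (1 / 2) * quadForm D⁻¹ (projK ((A *ᵥ y k) - (Hhalf *ᵥ z k) + tg w)))
    (xs : ∀ i, Fin (d i) → ℝ) (hxsX : ∀ i, xs i ∈ X i)
    (hxsg : ∀ j, (∑ i, g i (xs i) j) ≤ 0)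
    (hxsh : ∀ j, (∑ i, (B i *ᵥ xs i + c i) j) = 0)
    (mus : Fin m → ℝ) (hmus : ∀ j, 0 ≤ mus j) (lams : Fin p → ℝ)
    (hcs : (∑ j, mus j * ∑ i, g i (xs i) j) = 0)
    (hsaddle : ∀ w, (∀ i, w i ∈ X i) →
      F xs + (∑ j, mus j * ∑ i, g i (xs i) j) + (∑ j, lams j * ∑ i, (B i *ᵥ xs i + c i) j)
        ≤ F w + (∑ j, mus j * ∑ i, g i (w i) j) + (∑ j, lams j * ∑ i, (B i *ᵥ w i + c i) j))
    (ys : Idx N m p → ℝ) (hys : ∀ (i : Fin N) (j : Blk m p), ys (i, j) = Sum.elim mus lams j)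
    (zstar vstar : Idx N m p → ℝ)
    (hzstar : zstar = Hhalfdag *ᵥ tg xs)
    (hvstar : vstar = Hhalf *ᵥ zstar)
    :
    ∀ k : ℕ,
      F (x (k + 1)) - F xs
        ≤ (1 / 2) * (quadForm A (y k) - quadForm A (y (k + 1)))
          + (1 / (2 * ρ)) *
            (quadForm Htdag ((Hhalf *ᵥ z k) - vstar)
              - quadForm Htdag ((Hhalf *ᵥ z (k + 1)) - vstar)) := by
  intro k
  classical
  -- symmetry facts
  have hPAsym : PAᵀ = PA := herm_tr hPA.1
  have hPHtsym : PHtᵀ = PHt := herm_tr hPHt.1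
  have hMsym : Hhalfᵀ = Hhalf := herm_tr hHhalfpsd.1
  have hHtsym : Htldᵀ = Htld := by rw [← hHhalfsq, transpose_mul, hMsym]
  have hAsym : Aᵀ = A := by rw [hA]; exact kron_one_symm hPAsym
  have hHtdagsym : Htdagᵀ = Htdag := mpinv_symm hHtsym hHtdag
  -- Moore-Penrose facts
  have hTd : Htdag = Hhalfdag * Hhalfdag := by
    refine mpinv_unique hHtdag ?_
    have h := mpinv_sq hMsym hHhalfdag
    rwa [hHhalfsq] at h
  have hcommMd : Hhalf * Hhalfdag = Hhalfdag * Hhalf := mpinv_comm hMsym hHhalfdag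
  have hMID1 : Hhalf * Htdag * Htld = Hhalf := by
    rw [hTd, ← hHhalfsq]
    calc Hhalf * (Hhalfdag * Hhalfdag) * (Hhalf * Hhalf)
        = (Hhalf * Hhalfdag) * ((Hhalfdag * Hhalf) * Hhalf) := by noncomm_ring
      _ = (Hhalf * Hhalfdag) * ((Hhalf * Hhalfdag) * Hhalf) := by rw [hcommMd]
      _ = (Hhalf * (Hhalfdag * Hhalf * Hhalfdag)) * Hhalf := by noncomm_ring
      _ = (Hhalf * Hhalfdag) * Hhalf := by rw [hHhalfdag.2.1]
      _ = Hhalf := hHhalfdag.1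
  have hMID2 : Htld * Htdag * Hhalf = Hhalf := by
    have h := congrArg Matrix.transpose hMID1
    rwa [transpose_mul, transpose_mul, hMsym, hHtsym, hHtdagsym, ← mul_assoc] at h
  have hMP : Hhalf * (Hhalf * Hhalfdag) = Hhalf := by
    rw [hcommMd, ← mul_assoc]; exact hHhalfdag.1
  -- diagonal structure of D
  set E := PA + ρ • PH with hE
  have hEpos : ∀ i, 0 < E i i := by
    intro i
    have hne : (Pi.single i 1 : Fin N → ℝ) ≠ 0 := by
      intro hcon
      have := congrFun hcon i
      simp [Pi.single_eq_same] at this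
    have h2 := hDpd.dotProduct_mulVec_pos hne
    have h3 : dotProduct (star (Pi.single i (1:ℝ))) (E *ᵥ Pi.single i 1) = E i i := by
      simp [Matrix.mulVec, dotProduct, Pi.single_apply, mul_ite, ite_mul,
        Finset.sum_ite_eq, Finset.sum_ite_eq']
    rwa [h3] at h2
  set dv : Idx N m p → ℝ := fun ij => E ij.1 ij.1 with hdv
  have hdvpos : ∀ ij, 0 < dv ij := fun ij => hEpos ij.1
  have hdvne : ∀ ij, dv ij ≠ 0 := fun ij => (hdvpos ij).ne'
  have hDdg : D = Matrix.diagonal dv := by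
    rw [hD, hA]
    ext ⟨i, j⟩ ⟨i', j'⟩
    rw [Matrix.add_apply, Matrix.smul_apply, Matrix.kronecker_apply, Matrix.kronecker_apply]
    by_cases hj : j = j'
    · subst hj
      by_cases hi : i = i'
      · subst hi
        rw [Matrix.diagonal_apply_eq, Matrix.one_apply_eq, hdv, hE]
        simp [Matrix.add_apply, Matrix.smul_apply]
      · have h0 : E i i' = 0 := hDdiag (by exact hi)
        rw [hE] at h0
        simp only [Matrix.add_apply, Matrix.smul_apply, smul_eq_mul] at h0
        rw [Matrix.diagonal_apply_ne _ (by simp [Prod.ext_iff, hi])]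
        rw [Matrix.one_apply_eq]
        simp only [smul_eq_mul]
        linarith
    · rw [Matrix.one_apply_ne hj, Matrix.diagonal_apply_ne _ (by simp [Prod.ext_iff, hj])]
      simp
  have hDinv : D⁻¹ = Matrix.diagonal (fun ij => (dv ij)⁻¹) := by
    apply Matrix.inv_eq_right_inv
    rw [hDdg, Matrix.diagonal_mul_diagonal]
    have h1 : ∀ ij, dv ij * (dv ij)⁻¹ = 1 := fun ij => mul_inv_cancel₀ (hdvne ij)
    simp only [Pi.mul_apply, h1]
    exact Matrix.diagonal_one
  -- abbreviations
  set x1 := x (k + 1) with hx1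
  set y0 := y k with hy0v
  set y1 := y (k + 1) with hy1v
  set g1 := tg x1 with hg1
  set gs := tg xs with hgs
  set cv := A *ᵥ y0 - Hhalf *ᵥ z k with hcv
  set q := cv + g1 with hqd
  set r := projK q with hr
  have hy1eq : y1 = projK (D⁻¹ *ᵥ q) := by
    have h := hyupd k
    rw [← hy1v, ← hy0v, ← hx1, ← hg1, ← hcv, ← hqd] at h
    exact h
  have hDmul : ∀ v : Idx N m p → ℝ, D⁻¹ *ᵥ v = fun ij => (dv ij)⁻¹ * v ij := by
    intro v; funext ij; rw [hDinv, mulVec_diagonal]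
  -- coordinates of y1
  have hy1c : ∀ ij, y1 ij = (dv ij)⁻¹ * r ij := by
    rintro ⟨i, j⟩
    rw [hy1eq, hDmul]
    rcases j with jj | jj
    · rw [projK_inl, hr, projK_inl]
      rcases le_or_gt 0 (q (i, Sum.inl jj)) with h | h
      · rw [max_eq_left h, max_eq_left (mul_nonneg (inv_nonneg.2 (hdvpos _).le) h)]
      · rw [max_eq_right h.le, mul_zero, max_eq_right]
        exact mul_nonpos_of_nonneg_of_nonpos (inv_nonneg.2 (hdvpos _).le) h.le
    · rw [projK_inr, hr, projK_inr]
  have hy1nn : ∀ i jj, 0 ≤ y1 (i, Sum.inl jj) := by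
    intro i jj
    rw [hy1c]
    apply mul_nonneg (inv_nonneg.2 (hdvpos _).le)
    rw [hr, projK_inl]
    exact le_max_right _ _
  have hqr : ∀ ij, q ij * r ij = r ij ^ 2 := by
    rintro ⟨i, j⟩
    rcases j with jj | jj
    · rw [hr, projK_inl]
      rcases le_or_gt 0 (q (i, Sum.inl jj)) with h | h
      · rw [max_eq_left h]; ring
      · rw [max_eq_right h.le]; ring
    · rw [hr, projK_inr]; ring
  -- quadratic identities
  have hQr : quadForm D⁻¹ r = quadForm D y1 := by
    rw [hDinv, hDdg, quad_diagonal, quad_diagonal]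
    apply Finset.sum_congr rfl
    intro ij _
    rw [hy1c ij]
    have h := hdvne ij
    field_simp
  have hqy1 : q ⬝ᵥ y1 = quadForm D y1 := by
    rw [hDdg, quad_diagonal, dotProduct]
    apply Finset.sum_congr rfl
    intro ij _
    have h := hdvne ij
    calc q ij * y1 ij = (dv ij)⁻¹ * (q ij * r ij) := by rw [hy1c ij]; ring
      _ = (dv ij)⁻¹ * r ij ^ 2 := by rw [hqr ij]
      _ = dv ij * y1 ij ^ 2 := by rw [hy1c ij]; field_simp
  -- Step E : first-order optimality
  have hOPT : F x1 - F xs ≤ y1 ⬝ᵥ (gs - g1) := by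
    have hC : 0 ≤ F xs - F x1 + y1 ⬝ᵥ (gs - g1) := by
      apply pos_coeff_of_forall
        (C := (1/2) * ∑ ij, (dv ij)⁻¹ * (gs ij - g1 ij) ^ 2)
      intro t ht0 ht1
      set w : ∀ i, Fin (d i) → ℝ := fun i => (1 - t) • x1 i + t • xs i with hw
      have hwi : ∀ i, w i = (1 - t) • x1 i + t • xs i := fun i => by rw [hw]
      have hwX : ∀ i, w i ∈ X i := by
        intro i
        rw [hwi i]
        have hx1m : x1 i ∈ X i := by rw [hx1]; exact hxX k i
        exact hXcv i hx1m (hxsX i) (by linarith) ht0.le (by ring)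
      have hmin := hxmin k w hwX
      rw [← hx1, ← hy0v, ← hg1, ← hcv, ← hqd, ← hr] at hmin
      have hFw : F w ≤ (1 - t) * F x1 + t * F xs := by
        rw [hF, hF, hF]
        calc ∑ i, f i (w i) ≤ ∑ i, ((1 - t) * f i (x1 i) + t * f i (xs i)) := by
              apply Finset.sum_le_sum
              intro i _
              rw [hwi i]
              have h := (hf i).2 (Set.mem_univ (x1 i)) (Set.mem_univ (xs i))
                (by linarith : (0:ℝ) ≤ 1 - t) ht0.le (by ring)
              simpa [smul_eq_mul] using h
          _ = (1 - t) * ∑ i, f i (x1 i) + t * ∑ i, f i (xs i) := by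
              rw [Finset.sum_add_distrib, Finset.mul_sum, Finset.mul_sum]
      have hcoord : ∀ ij : Idx N m p,
          (projK (cv + tg w) ij) ^ 2 ≤ (r ij + t * (gs ij - g1 ij)) ^ 2 := by
        rintro ⟨i, j⟩
        rcases j with jj | jj
        · rw [projK_inl, Pi.add_apply, htg1 w i jj]
          have hgc : g i (w i) jj ≤ (1 - t) * g i (x1 i) jj + t * g i (xs i) jj := by
            rw [hwi i]
            have h := (hg i jj).2 (Set.mem_univ (x1 i)) (Set.mem_univ (xs i))
              (by linarith : (0:ℝ) ≤ 1 - t) ht0.le (by ring)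
            simpa [smul_eq_mul] using h
          have e2 : q (i, Sum.inl jj) = cv (i, Sum.inl jj) + g i (x1 i) jj := by
            rw [hqd, Pi.add_apply, hg1, htg1]
          have e3 : gs (i, Sum.inl jj) = g i (xs i) jj := by rw [hgs, htg1]
          have e4 : g1 (i, Sum.inl jj) = g i (x1 i) jj := by rw [hg1, htg1]
          have h1 : cv (i, Sum.inl jj) + g i (w i) jj
              ≤ q (i, Sum.inl jj) + t * (gs (i, Sum.inl jj) - g1 (i, Sum.inl jj)) := by
            rw [e2, e3, e4]; linarith
          calc max (cv (i, Sum.inl jj) + g i (w i) jj) 0 ^ 2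
              ≤ max (q (i, Sum.inl jj) + t * (gs (i, Sum.inl jj) - g1 (i, Sum.inl jj))) 0 ^ 2 :=
                max_sq_mono h1
            _ ≤ (max (q (i, Sum.inl jj)) 0 + t * (gs (i, Sum.inl jj) - g1 (i, Sum.inl jj))) ^ 2 :=
                max_shift_sq
            _ = (r (i, Sum.inl jj) + t * (gs (i, Sum.inl jj) - g1 (i, Sum.inl jj))) ^ 2 := by
                rw [hr, projK_inl]
        · have e2 : q (i, Sum.inr jj) = cv (i, Sum.inr jj) + (B i *ᵥ x1 i + c i) jj := by
            rw [hqd, Pi.add_apply, hg1, htg2]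
          have e3 : gs (i, Sum.inr jj) = (B i *ᵥ xs i + c i) jj := by rw [hgs, htg2]
          have e4 : g1 (i, Sum.inr jj) = (B i *ᵥ x1 i + c i) jj := by rw [hg1, htg2]
          have hx : projK (cv + tg w) (i, Sum.inr jj)
              = cv (i, Sum.inr jj) + (B i *ᵥ w i + c i) jj := by
            rw [projK_inr, Pi.add_apply, htg2]
          have hw2 : (B i *ᵥ w i + c i) jj
              = (1 - t) * (B i *ᵥ x1 i + c i) jj + t * (B i *ᵥ xs i + c i) jj := by
            rw [hwi i, mulVec_add, mulVec_smul, mulVec_smul]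
            simp only [Pi.add_apply, Pi.smul_apply, smul_eq_mul]
            ring
          rw [hx, hw2, hr, projK_inr, e2, e3, e4]
          exact le_of_eq (by ring)
      have hyd : y1 ⬝ᵥ (gs - g1) = ∑ ij, ((dv ij)⁻¹ * r ij) * (gs ij - g1 ij) := by
        rw [dotProduct]
        apply Finset.sum_congr rfl
        intro ij _
        rw [hy1c ij, Pi.sub_apply]
      have hqb : quadForm D⁻¹ (projK (cv + tg w))
          ≤ quadForm D⁻¹ r + 2 * t * (y1 ⬝ᵥ (gs - g1))
            + t ^ 2 * ∑ ij, (dv ij)⁻¹ * (gs ij - g1 ij) ^ 2 := by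
        rw [hDinv, quad_diagonal, quad_diagonal, hyd, Finset.mul_sum, Finset.mul_sum,
          ← Finset.sum_add_distrib, ← Finset.sum_add_distrib]
        apply Finset.sum_le_sum
        intro ij _
        have h2 := hcoord ij
        have h3 : (0:ℝ) ≤ (dv ij)⁻¹ := inv_nonneg.2 (hdvpos ij).le
        calc (dv ij)⁻¹ * projK (cv + tg w) ij ^ 2
            ≤ (dv ij)⁻¹ * (r ij + t * (gs ij - g1 ij)) ^ 2 :=
              mul_le_mul_of_nonneg_left h2 h3
          _ = (dv ij)⁻¹ * r ij ^ 2 + 2 * t * ((dv ij)⁻¹ * r ij * (gs ij - g1 ij))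
              + t ^ 2 * ((dv ij)⁻¹ * (gs ij - g1 ij) ^ 2) := by ring
      linarith
    linarith
  -- Step F : y1 ⬝ᵥ gs ≤ y1 ⬝ᵥ vstar
  have hvs : vstar = (Hhalf * Hhalfdag) *ᵥ gs := by
    rw [hvstar, hzstar, mulVec_mulVec]
  have hvd : Hhalf *ᵥ (gs - vstar) = 0 := by
    rw [mulVec_sub, hvs, mulVec_mulVec, hMP, sub_self]
  have hHtd0 : Htld *ᵥ (gs - vstar) = 0 := by
    rw [← hHhalfsq, ← mulVec_mulVec, hvd, mulVec_zero]
  have hblocks : ∀ j : Blk m p, ∃ t0 : ℝ, ∀ i, gs (i, j) - vstar (i, j) = t0 := by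
    intro j
    have h1 : PHt *ᵥ (fun i => (gs - vstar) (i, j)) = 0 := by
      funext i
      have h2 := congrFun hHtd0 (i, j)
      rw [hHtld, kron_one_mulVec] at h2
      simpa [Matrix.mulVec, dotProduct] using h2
    obtain ⟨t0, ht0⟩ := (hPHtnull _).1 h1
    exact ⟨t0, fun i => by have := congrFun ht0 i; simpa using this⟩
  have hsumv : ∀ j : Blk m p, (∑ i, vstar (i, j)) = 0 := by
    intro j
    set χ : Idx N m p → ℝ := fun ij => if ij.2 = j then 1 else 0 with hχ
    have hχt : Htld *ᵥ χ = 0 := by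
      funext ij
      obtain ⟨i, j'⟩ := ij
      rw [hHtld, kron_one_mulVec]
      have h1 : PHt *ᵥ (fun _ : Fin N => (if j' = j then (1:ℝ) else 0)) = 0 :=
        (hPHtnull _).2 ⟨_, rfl⟩
      have h2 := congrFun h1 i
      simp only [Matrix.mulVec, dotProduct] at h2
      simp only [hχ]
      simpa using h2
    have hχh : Hhalf *ᵥ χ = 0 := by
      have h3 : (Hhalf *ᵥ χ) ⬝ᵥ (Hhalf *ᵥ χ) = 0 := by
        rw [dot_shift hMsym, mulVec_mulVec, hHhalfsq, hχt, dotProduct_zero]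
      exact dotProduct_self_eq_zero.mp h3
    have h4 : χ ⬝ᵥ vstar = 0 := by
      rw [hvstar, dot_symm hMsym, hχh, dotProduct_zero]
    have h5 : χ ⬝ᵥ vstar = ∑ i, vstar (i, j) := by
      rw [dotProduct, Fintype.sum_prod_type]
      apply Finset.sum_congr rfl
      intro i _
      simp [hχ, ite_mul]
    rw [← h5]; exact h4
  have hNpos : (0:ℝ) < (N : ℝ) := by
    have : (0:ℕ) < N := hN
    exact_mod_cast this
  have hstepF : y1 ⬝ᵥ (gs - vstar) ≤ 0 := by
    have hpt : ∀ ij : Idx N m p, y1 ij * (gs ij - vstar ij) ≤ 0 := by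
      rintro ⟨i, j⟩
      obtain ⟨t0, ht0⟩ := hblocks j
      have hsum0 : (∑ i' : Fin N, (gs (i', j) - vstar (i', j))) = (N : ℝ) * t0 := by
        rw [Finset.sum_congr rfl (fun i' _ => ht0 i')]
        simp [Finset.sum_const, Finset.card_univ, mul_comm]
      rcases j with jj | jj
      · have hle : (∑ i' : Fin N, (gs (i', Sum.inl jj) - vstar (i', Sum.inl jj))) ≤ 0 := by
          rw [Finset.sum_sub_distrib, hsumv (Sum.inl jj), sub_zero]
          have hgsum : (∑ i' : Fin N, gs (i', Sum.inl jj)) = ∑ i', g i' (xs i') jj := by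
            apply Finset.sum_congr rfl
            intro i' _
            rw [hgs, htg1]
          rw [hgsum]
          exact hxsg jj
        have ht0le : t0 ≤ 0 := by
          rw [hsum0] at hle
          nlinarith
        rw [ht0 i]
        exact mul_nonpos_of_nonneg_of_nonpos (hy1nn i jj) ht0le
      · have heq0 : (∑ i' : Fin N, (gs (i', Sum.inr jj) - vstar (i', Sum.inr jj))) = 0 := by
          rw [Finset.sum_sub_distrib, hsumv (Sum.inr jj), sub_zero]
          have hgsum : (∑ i' : Fin N, gs (i', Sum.inr jj)) = ∑ i', (B i' *ᵥ xs i' + c i') jj := by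
            apply Finset.sum_congr rfl
            intro i' _
            rw [hgs, htg2]
          rw [hgsum]
          exact hxsh jj
        have ht00 : t0 = 0 := by
          rw [hsum0] at heq0
          exact (mul_eq_zero.mp heq0).resolve_left hNpos.ne'
        rw [ht0 i, ht00, mul_zero]
    calc y1 ⬝ᵥ (gs - vstar) = ∑ ij, y1 ij * (gs ij - vstar ij) := by
          rw [dotProduct]; apply Finset.sum_congr rfl; intro ij _; rw [Pi.sub_apply]
      _ ≤ 0 := Finset.sum_nonpos (fun ij _ => hpt ij)
  -- Step G : assembly
  have hg1dot : y1 ⬝ᵥ g1 = quadForm D y1 - y1 ⬝ᵥ (A *ᵥ y0) + y1 ⬝ᵥ (Hhalf *ᵥ z k) := by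
    have h1 : y1 ⬝ᵥ q = quadForm D y1 := by rw [dotProduct_comm]; exact hqy1
    have h2 : y1 ⬝ᵥ q = y1 ⬝ᵥ cv + y1 ⬝ᵥ g1 := by rw [hqd, dotProduct_add]
    have h3 : y1 ⬝ᵥ cv = y1 ⬝ᵥ (A *ᵥ y0) - y1 ⬝ᵥ (Hhalf *ᵥ z k) := by
      rw [hcv, dotProduct_sub]
    linarith
  have hcross : y1 ⬝ᵥ (A *ᵥ y0) ≤ (1/2) * quadForm A y0 + (1/2) * quadForm A y1 := by
    have h0 : 0 ≤ quadForm A (y0 - y1) := by rw [hA]; exact kron_one_quad_nonneg hPA _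
    have hexp : quadForm A (y0 - y1)
        = quadForm A y0 - 2 * (y1 ⬝ᵥ (A *ᵥ y0)) + quadForm A y1 := by
      unfold quadForm
      rw [mulVec_sub, dotProduct_sub, sub_dotProduct, sub_dotProduct,
        dot_symm hAsym y0 y1]
      ring
    linarith
  have hsplit : quadForm D y1
      = quadForm A y1 + ρ * quadForm (PH ⊗ₖ (1 : Matrix (Blk m p) (Blk m p) ℝ)) y1 := by
    unfold quadForm
    rw [hD, add_mulVec, dotProduct_add, smul_mulVec, dotProduct_smul, smul_eq_mul]
  have hHism : quadForm Htld y1 ≤ quadForm (PH ⊗ₖ (1 : Matrix (Blk m p) (Blk m p) ℝ)) y1 := by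
    have h0 : 0 ≤ quadForm ((PH - PHt) ⊗ₖ (1 : Matrix (Blk m p) (Blk m p) ℝ)) y1 :=
      kron_one_quad_nonneg hHHt _
    have h1 : quadForm ((PH - PHt) ⊗ₖ (1 : Matrix (Blk m p) (Blk m p) ℝ)) y1
        = quadForm (PH ⊗ₖ (1 : Matrix (Blk m p) (Blk m p) ℝ)) y1 - quadForm Htld y1 := by
      rw [kron_one_sub, hHtld]
      unfold quadForm
      rw [sub_mulVec, dotProduct_sub]
    linarith
  have hHtnn : 0 ≤ quadForm Htld y1 := by rw [hHtld]; exact kron_one_quad_nonneg hPHt _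
  -- the v-update
  have hv1 : Hhalf *ᵥ z (k + 1) = Hhalf *ᵥ z k + ρ • (Htld *ᵥ y1) := by
    have h := hzupd k
    rw [← hy1v] at h
    rw [h, mulVec_add, mulVec_smul, mulVec_mulVec, hHhalfsq]
  have hu : Hhalf *ᵥ z k - vstar = Hhalf *ᵥ (z k - zstar) := by
    rw [mulVec_sub, hvstar]
  have hucross1 : (Hhalf *ᵥ z k - vstar) ⬝ᵥ (Htdag *ᵥ (Htld *ᵥ y1))
      = y1 ⬝ᵥ (Hhalf *ᵥ z k - vstar) := by
    rw [hu, dot_shift hMsym, mulVec_mulVec, mulVec_mulVec, hMID1, dot_symm hMsym]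
  have hucross2 : (Htld *ᵥ y1) ⬝ᵥ (Htdag *ᵥ (Hhalf *ᵥ z k - vstar))
      = y1 ⬝ᵥ (Hhalf *ᵥ z k - vstar) := by
    rw [hu, dot_shift hHtsym, mulVec_mulVec, mulVec_mulVec, hMID2]
  have hucross3 : (Htld *ᵥ y1) ⬝ᵥ (Htdag *ᵥ (Htld *ᵥ y1)) = y1 ⬝ᵥ (Htld *ᵥ y1) := by
    rw [dot_shift hHtsym, mulVec_mulVec, mulVec_mulVec, hHtdag.1]
  have hQdiff : quadForm Htdag (Hhalf *ᵥ z k - vstar)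
        - quadForm Htdag (Hhalf *ᵥ z (k + 1) - vstar)
      = -(2 * ρ * (y1 ⬝ᵥ (Hhalf *ᵥ z k - vstar))) - ρ ^ 2 * quadForm Htld y1 := by
    have hnext : Hhalf *ᵥ z (k + 1) - vstar
        = (Hhalf *ᵥ z k - vstar) + ρ • (Htld *ᵥ y1) := by
      rw [hv1]
      funext ij
      simp only [Pi.add_apply, Pi.sub_apply, Pi.smul_apply, smul_eq_mul]
      ring
    rw [hnext]
    unfold quadForm
    rw [mulVec_add, mulVec_smul, dotProduct_add, add_dotProduct, add_dotProduct,
      dotProduct_smul, dotProduct_smul, smul_dotProduct, smul_dotProduct,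
      hucross1, hucross2, hucross3]
    simp only [smul_eq_mul]
    ring
  -- final combination
  have hdots1 : y1 ⬝ᵥ (gs - g1) = y1 ⬝ᵥ gs - y1 ⬝ᵥ g1 := dotProduct_sub _ _ _
  have hdots2 : y1 ⬝ᵥ (gs - vstar) = y1 ⬝ᵥ gs - y1 ⬝ᵥ vstar := dotProduct_sub _ _ _
  have hdots3 : y1 ⬝ᵥ (Hhalf *ᵥ z k - vstar)
      = y1 ⬝ᵥ (Hhalf *ᵥ z k) - y1 ⬝ᵥ vstar := dotProduct_sub _ _ _
  have hexpand : 1 / (2 * ρ) * (quadForm Htdag (Hhalf *ᵥ z k - vstar)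
        - quadForm Htdag (Hhalf *ᵥ z (k + 1) - vstar))
      = -(y1 ⬝ᵥ (Hhalf *ᵥ z k - vstar)) - (ρ / 2) * quadForm Htld y1 := by
    rw [hQdiff]
    field_simp
  have hPHnn : 0 ≤ quadForm (PH ⊗ₖ (1 : Matrix (Blk m p) (Blk m p) ℝ)) y1 :=
    le_trans hHtnn hHism
  have hmono : (ρ / 2) * quadForm Htld y1
      ≤ ρ * quadForm (PH ⊗ₖ (1 : Matrix (Blk m p) (Blk m p) ℝ)) y1 := by
    calc (ρ / 2) * quadForm Htld y1
        ≤ (ρ / 2) * quadForm (PH ⊗ₖ (1 : Matrix (Blk m p) (Blk m p) ℝ)) y1 :=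
          mul_le_mul_of_nonneg_left hHism (by linarith)
      _ ≤ ρ * quadForm (PH ⊗ₖ (1 : Matrix (Blk m p) (Blk m p) ℝ)) y1 :=
          mul_le_mul_of_nonneg_right (by linarith) hPHnn
  rw [hexpand]
  linarith
end
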